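/- arXiv:1603.09597 — 7 statements merged into one kernel-verified Lean document; each statement's English description precedes it below -/
import Mathlib

section
/- The indirection-level balancing operation ⋄ on ℕ × ℕ defined by (a₁, b₁) ⋄ (a₂, b₂) = (a₁ + (a₂ ∸ b₁), b₂ + (b₁ ∸ a₂)), where ∸ denotes truncated subtraction on ℕ, is associative: for all p q r : ℕ × ℕ, (p ⋄ q) ⋄ r = p ⋄ (q ⋄ r). -/
/-- The indirection-level balancing operation on pairs of natural numbers:
`(a₁, b₁) ⋄ (a₂, b₂) = (a₁ + (a₂ ∸ b₁), b₂ + (b₁ ∸ a₂))`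
(with truncated subtraction on `ℕ`). -/
def indlevBalance (p q : ℕ × ℕ) : ℕ × ℕ :=
  (p.1 + (q.1 - p.2), q.2 + (p.2 - q.1))

theorem indlevBalance_assoc (p q r : ℕ × ℕ) :
    indlevBalance (indlevBalance p q) r = indlevBalance p (indlevBalance q r) := by
  simp only [indlevBalance, Prod.mk.injEq]
  omega
end

section
/- Model a GPG edge over a type α of locations as a quadruple e = (s, i, t, j) with source s : α, source indirection level i : ℕ, target t : α, and target indirection level j : ℕ. Define the TS composition of e₁ = (s₁, i₁, t₁, j₁) and e₂ = (s₂, i₂, t₂, j₂) (intended for t₁ = s₂) as comp e₁ e₂ = (s₁, i₁ + (i₂ ∸ j₁), t₂, j₂ + (j₁ ∸ i₂)), where ∸ is truncated subtraction. Then for any three edges e₁, e₂, e₃ with t₁ = s₂ and t₂ = s₃, composition is associative: comp (comp e₁ e₂) e₃ = comp e₁ (comp e₂ e₃). -/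
/-- A GPG edge: source `s` with indirection level `i`, target `t` with indirection level `j`. -/
structure GPGEdge (α : Type*) where
  s : α
  i : ℕ
  t : α
  j : ℕ

/-- TS composition of GPG edges (intended for `e₁.t = e₂.s`), balancing the
indirection levels of the pivot using truncated subtraction. -/
def GPGEdge.comp {α : Type*} (e₁ e₂ : GPGEdge α) : GPGEdge α :=
  ⟨e₁.s, e₁.i + (e₂.i - e₁.j), e₂.t, e₂.j + (e₁.j - e₂.i)⟩

theorem GPGEdge.comp_assoc {α : Type*} (e₁ e₂ e₃ : GPGEdge α)
    (h₁ : e₁.t = e₂.s) (h₂ : e₂.t = e₃.s) :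
    (e₁.comp e₂).comp e₃ = e₁.comp (e₂.comp e₃) := by
  simp only [GPGEdge.comp, GPGEdge.mk.injEq]
  refine ⟨trivial, by omega, trivial, by omega⟩
end

section
/- Soundness of TS edge composition: let α be a type, f : α → α, x y z : α, and a₁ b₁ a₂ b₂ : ℕ. If f^[a₁] x = f^[b₁] y and f^[a₂] y = f^[b₂] z, then f^[a₁ + (a₂ ∸ b₁)] x = f^[b₂ + (b₁ ∸ a₂)] z, where ∸ is truncated subtraction and f^[n] is the n-fold iterate of f. -/
/-- Soundness of TS edge composition on concrete memory. -/
theorem ts_composition_sound {α : Type*} (f : α → α) (x y z : α)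
    (a₁ b₁ a₂ b₂ : ℕ)
    (hn : f^[a₁] x = f^[b₁] y) (hp : f^[a₂] y = f^[b₂] z) :
    f^[a₁ + (a₂ - b₁)] x = f^[b₂ + (b₁ - a₂)] z := by
  rw [add_comm a₁, Function.iterate_add_apply, hn, ← Function.iterate_add_apply,
    add_comm b₂, Function.iterate_add_apply f (b₁ - a₂) b₂, ← hp,
    ← Function.iterate_add_apply]
  congr 1
  omega
end

section
/- Soundness of SS edge composition: let α be a type, f : α → α, x y z : α, and i j k l : ℕ. If f^[i] x = f^[j] y and f^[k] x = f^[l] z, then f^[l + (i ∸ k)] z = f^[j + (k ∸ i)] y, where ∸ is truncated subtraction and f^[n] is the n-fold iterate of f. -/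
/-- Soundness of SS edge composition on concrete memory. -/
theorem ss_composition_sound {α : Type*} (f : α → α) (x y z : α)
    (i j k l : ℕ)
    (hn : f^[i] x = f^[j] y) (hp : f^[k] x = f^[l] z) :
    f^[l + (i - k)] z = f^[j + (k - i)] y := by
  rcases le_total k i with h | h
  · have hik : k + (i - k) = i := Nat.add_sub_cancel' h
    rw [Nat.sub_eq_zero_of_le h, Nat.add_zero, Nat.add_comm,
      Function.iterate_add_apply, ← hp, ← Function.iterate_add_apply, Nat.sub_add_cancel h, hn]
  · have hki : i + (k - i) = k := Nat.add_sub_cancel' h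
    rw [Nat.sub_eq_zero_of_le h, Nat.add_zero, Nat.add_comm j,
      Function.iterate_add_apply, ← hn, ← Function.iterate_add_apply, Nat.sub_add_cancel h, hp]
end

section
/- Soundness of ST edge composition: let α be a type, f : α → α, w x y : α, and i j k l : ℕ. If f^[k] w = f^[l] x and f^[i] x = f^[j] y, then f^[k + (i ∸ l)] w = f^[j + (l ∸ i)] y, where ∸ is truncated subtraction and f^[n] is the n-fold iterate of f. -/
/-- Soundness of ST edge composition on concrete memory. -/
theorem st_composition_sound {α : Type*} (f : α → α) (w x y : α)
    (i j k l : ℕ)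
    (hp : f^[k] w = f^[l] x) (hn : f^[i] x = f^[j] y) :
    f^[k + (i - l)] w = f^[j + (l - i)] y := by
  rcases le_total i l with h | h
  · have hl : f^[l] x = f^[l - i] (f^[i] x) := by
      rw [← Function.iterate_add_apply]; congr 1; omega
    rw [Nat.sub_eq_zero_of_le h, Nat.add_zero, hp, hl, hn,
      ← Function.iterate_add_apply, Nat.add_comm]
  · rw [Nat.sub_eq_zero_of_le h, Nat.add_zero, Nat.add_comm,
      Function.iterate_add_apply, hp, ← Function.iterate_add_apply,
      show i - l + l = i by omega, hn]
end

section
/- Soundness of TT edge composition: let α be a type, f : α → α, w x z : α, and i j k l : ℕ. If f^[k] z = f^[l] x and f^[i] w = f^[j] x, then f^[i + (l ∸ j)] w = f^[k + (j ∸ l)] z, where ∸ is truncated subtraction and f^[n] is the n-fold iterate of f. -/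
/-- Soundness of TT edge composition on concrete memory. -/
theorem tt_composition_sound {α : Type*} (f : α → α) (w x z : α)
    (i j k l : ℕ)
    (hp : f^[k] z = f^[l] x) (hn : f^[i] w = f^[j] x) :
    f^[i + (l - j)] w = f^[k + (j - l)] z := by
  rcases le_total j l with h | h
  · have : f^[i + (l - j)] w = f^[l] x := by
      rw [add_comm, Function.iterate_add_apply, hn, ← Function.iterate_add_apply]
      congr 1; omega
    rw [this, ← hp]
    congr 1; omega
  · have : f^[k + (j - l)] z = f^[j] x := by
      rw [add_comm, Function.iterate_add_apply, hp, ← Function.iterate_add_apply]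
      congr 1; omega
    rw [this, ← hn]
    congr 1; omega
end

section
/- Edge application to concrete memory enforces the edge's constraint: let α be a type, f : α → α, x y : α, i j : ℕ with 1 ≤ i. Let w = f^[i-1] x and suppose f^[m] x ≠ w for all m < i - 1. Then, with f' = Function.update f w (f^[j] y), we have f'^[m] x = f^[m] x for all m ≤ i - 1, and f'^[i] x = f^[j] y. -/
/-- Applying a GPG edge `x --(i,j)--> y` to a concrete memory `f` by updating
the `(i-1)`-th pointee of `x` to point to the `j`-th pointee of `y` enforces
the edge's constraint, provided the locations `f^[m] x` for `m < i-1` are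
distinct from `f^[i-1] x`. -/
theorem edge_application_concrete {α : Type*} [DecidableEq α]
    (f : α → α) (x y : α) (i j : ℕ) (hi : 1 ≤ i)
    (hchain : ∀ m < i - 1, f^[m] x ≠ f^[i - 1] x) :
    (∀ m ≤ i - 1, (Function.update f (f^[i - 1] x) (f^[j] y))^[m] x = f^[m] x) ∧
      (Function.update f (f^[i - 1] x) (f^[j] y))^[i] x = f^[j] y := by
  set f' := Function.update f (f^[i - 1] x) (f^[j] y) with hf'
  have key : ∀ m ≤ i - 1, f'^[m] x = f^[m] x := by
    intro m hm
    induction m with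
    | zero => simp
    | succ n ih =>
      have hn : n ≤ i - 1 := Nat.le_of_succ_le hm
      have hlt : n < i - 1 := hm
      rw [Function.iterate_succ_apply', Function.iterate_succ_apply', ih hn,
        hf', Function.update_of_ne (hchain n hlt)]
  refine ⟨key, ?_⟩
  have : i = (i - 1) + 1 := (Nat.succ_pred_eq_of_pos hi).symm
  rw [this, Function.iterate_succ_apply', key (i - 1) le_rfl, hf',
    Function.update_self]
end
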